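/- arXiv:1003.4375 — 2 statements merged into one kernel-verified Lean document; each statement's English description precedes it below -/
import Mathlib

section
/- For every nonzero linear differential polynomial B in (G₀) = (PS) ∩ K{X}, the number of elements of G₀ satisfies |G₀| ≥ c(B) + 1, where c(B) is the co-order of B in (PS). -/
open MvPolynomial

namespace DPPE

/-- Differential variables: `(Sum.inl i, k)` is the `k`-th derivative of `xᵢ`;
`(Sum.inr j, k)` is the `k`-th derivative of `uⱼ`. -/
abbrev Vr (n : ℕ) := (Fin n ⊕ Fin (n - 1)) × ℕ

/-- The differential polynomial ring `K{X ∪ U}`. -/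
abbrev R (K : Type) [Field K] (n : ℕ) := MvPolynomial (Vr n) K

variable {K : Type} [Field K] {n : ℕ}

/-- The order of `f` in the differential indeterminate `v` (equal to `-1` if absent). -/
noncomputable def ordIn {A : Type} [CommSemiring A] (f : MvPolynomial (Vr n) A)
    (v : Fin n ⊕ Fin (n - 1)) : ℤ :=
  WithBot.unbotD (-1) ((f.vars.filter (fun w => w.1 = v)).image (fun w => (w.2 : ℤ))).max

/-- The (total) order of the differential polynomial `f`. -/
noncomputable def ordTot {A : Type} [CommSemiring A] (f : MvPolynomial (Vr n) A) : ℕ :=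
  WithBot.unbotD 0 (f.vars.image Prod.snd).max

/-- `f` belongs to `K{X}`. -/
def xOnly {A : Type} [CommSemiring A] (f : MvPolynomial (Vr n) A) : Prop :=
  ∀ w ∈ f.vars, (w.1).isLeft

/-- `f` belongs to `K{U}`. -/
def uOnly {A : Type} [CommSemiring A] (f : MvPolynomial (Vr n) A) : Prop :=
  ∀ w ∈ f.vars, (w.1).isRight

/-- `f` is a linear (degree at most 1) differential polynomial. -/
def IsLinearPoly {A : Type} [CommSemiring A] (f : MvPolynomial (Vr n) A) : Prop :=
  f.totalDegree ≤ 1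

/-- The coefficient of the `k`-th derivative of the indeterminate `v` in `f`. -/
noncomputable def cf {A : Type} [CommSemiring A] (f : MvPolynomial (Vr n) A)
    (v : Fin n ⊕ Fin (n - 1)) (k : ℕ) : A :=
  MvPolynomial.coeff (Finsupp.single (v, k) 1) f

/-- An order embedding realizing the ranking `R*` on `X ∪ U` that eliminates `U` with
respect to `X`, orderly on each block, with `x_n < ⋯ < x_1` and `u_1 < ⋯ < u_{n-1}`. -/
def rkk (w : Vr n) : Lex (Bool × Lex (ℕ × ℕ)) :=
  toLex (Sum.elim (fun i => (false, toLex (w.2, (i.rev : ℕ))))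
    (fun j => (true, toLex (w.2, (j : ℕ)))) w.1)

/-- `v` is the lead (highest ranked derivative w.r.t. `R*`) of `g`. -/
def IsLead {A : Type} [CommSemiring A] (g : MvPolynomial (Vr n) A) (v : Vr n) : Prop :=
  v ∈ g.vars ∧ ∀ w ∈ g.vars, rkk w ≤ rkk v

/-- A system `𝒫(X,U)` of `n` linear differential polynomial parametric equations
`xᵢ = Pᵢ(U) = aᵢ - Hᵢ(U)` in `n-1` differential parameters, over an ordinary
differential field `(K, der)`;  `D` is the induced derivation on `K{X ∪ U}`.
`Fᵢ = xᵢ - aᵢ + Hᵢ(U)`. -/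
structure Sys (K : Type) [Field K] (n : ℕ) where
  hn : 2 ≤ n
  der : Derivation ℤ K K
  D : Derivation ℤ (R K n) (R K n)
  hD_C : ∀ c : K, D (C c) = C (der c)
  hD_X : ∀ (v : Fin n ⊕ Fin (n - 1)) (k : ℕ), D (X (v, k)) = X (v, k + 1)
  a : Fin n → K
  H : Fin n → R K n
  H_hom : ∀ i, (H i).IsHomogeneous 1
  H_u : ∀ i, uOnly (H i)
  H_ne : ∃ i, H i ≠ 0
  param : ∀ j : Fin (n - 1), ∃ i, 0 ≤ ordIn (H i) (Sum.inr j)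

namespace Sys

/-- `Fᵢ = xᵢ - aᵢ + Hᵢ(U)`. -/
noncomputable def F (S : Sys K n) (i : Fin n) : R K n :=
  X (Sum.inl i, 0) - C (S.a i) + S.H i

/-- `oᵢ = ord(Fᵢ)`. -/
noncomputable def o (S : Sys K n) (i : Fin n) : ℕ := ordTot (S.F i)

/-- `γⱼ = min_i (oᵢ - ord(Fᵢ, uⱼ))`. -/
noncomputable def gamZ (S : Sys K n) (j : Fin (n - 1)) : ℤ :=
  (Finset.univ : Finset (Fin n)).inf' ⟨⟨0, by have h := S.hn; omega⟩, Finset.mem_univ _⟩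
    fun i => (S.o i : ℤ) - ordIn (S.F i) (Sum.inr j)

noncomputable def gam (S : Sys K n) (j : Fin (n - 1)) : ℕ := (S.gamZ j).toNat

/-- `N = ∑ oᵢ`. -/
noncomputable def Nn (S : Sys K n) : ℕ := ∑ i, S.o i

/-- The completeness index `γ = ∑ γⱼ`. -/
noncomputable def gamT (S : Sys K n) : ℕ := ∑ j, S.gam j

/-- `L = ∑ (N - oᵢ - γ + 1)`. -/
noncomputable def L (S : Sys K n) : ℕ := ∑ i, (S.Nn - S.o i - S.gamT + 1)

/-- `Lʰ = ∑ (N - oᵢ - γ)`. -/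
noncomputable def Lh (S : Sys K n) : ℕ := ∑ i, (S.Nn - S.o i - S.gamT)

/-- The set `PS = {∂^k Fᵢ ∣ 0 ≤ k ≤ N - oᵢ - γ}`. -/
def PSset (S : Sys K n) : Set (R K n) :=
  {g | ∃ i k, k ≤ S.Nn - S.o i - S.gamT ∧ g = (⇑S.D)^[k] (S.F i)}

/-- `f` belongs to the polynomial subring `K[𝒳][𝒱]`. -/
def inXV (S : Sys K n) {A : Type} [CommSemiring A] (f : MvPolynomial (Vr n) A) : Prop :=
  ∀ w ∈ f.vars,
    Sum.elim (fun i => w.2 ≤ S.Nn - S.o i - S.gamT)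
      (fun j => w.2 ≤ S.Nn - S.gam j - S.gamT) w.1

/-- Membership in the ideal `(PS)` generated by `PS` in `K[𝒳][𝒱]`. -/
def PSIdealMem (S : Sys K n) (f : R K n) : Prop :=
  f ∈ Ideal.span S.PSset ∧ S.inXV f

/-- Substitution `x_{ik} ↦ ∂^k(Pᵢ(U))` defining the implicit ideal. -/
noncomputable def subst (S : Sys K n) : R K n →ₐ[K] R K n :=
  aeval fun w =>
    Sum.elim (fun i => (⇑S.D)^[w.2] (C (S.a i) - S.H i)) (fun j => X (Sum.inr j, w.2)) w.1

/-- Membership in the implicit ideal `ID = {f ∈ K{X} ∣ f(P₁(U),…,Pₙ(U)) = 0}`. -/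
def memID (S : Sys K n) (f : R K n) : Prop := xOnly f ∧ S.subst f = 0

/-- Membership in the differential ideal `[A]` of `K{X}` generated by `A ∈ K{X}`. -/
def memDiffSpanX (S : Sys K n) (A f : R K n) : Prop :=
  xOnly f ∧ f ∈ Ideal.span {g | ∃ k, g = (⇑S.D)^[k] A}

/-- `dim ID = n - 1`: the implicit ideal has a characteristic set `{A}` with `A`
a nonzero linear differential polynomial, i.e. `ID = [A]`. -/
def DimFull (S : Sys K n) : Prop :=
  ∃ A : R K n, A ≠ 0 ∧ IsLinearPoly A ∧ xOnly A ∧ ∀ f, (S.memID f ↔ S.memDiffSpanX A f)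

/-- The action of a linear differential operator `Lop = ∑ cₖ ∂^k ∈ K[∂]` on `f`. -/
noncomputable def applyOp (S : Sys K n) (Lop : Polynomial K) (f : R K n) : R K n :=
  ∑ k ∈ Lop.support, C (Lop.coeff k) * (⇑S.D)^[k] f

/-- `Lop` is a left divisor of `Fop` in `K[∂]`. -/
def leftDvd (S : Sys K n) (Lop Fop : Polynomial K) : Prop :=
  ∃ Mop : Polynomial K, ∀ f : R K n, S.applyOp Fop f = S.applyOp Lop (S.applyOp Mop f)

/-- For `B ∈ ID` linear, written `B = ∑ 𝓕ᵢ(xᵢ - aᵢ)`: the operator `𝓕ᵢ ∈ K[∂]`. -/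
noncomputable def opOf (S : Sys K n) (B : R K n) (i : Fin n) : Polynomial K :=
  ∑ k ∈ Finset.range (ordTot B + 1), Polynomial.monomial k (cf B (Sum.inl i) k)

/-- `B` is `ID`-primitive: the greatest common left divisor of `𝓕₁,…,𝓕ₙ` lies in `K`. -/
def IDPrimitive (S : Sys K n) (B : R K n) : Prop :=
  ∀ Lop : Polynomial K, (∀ i, S.leftDvd Lop (S.opOf B i)) → Lop.natDegree = 0

/-- `B'` is an `ID`-primitive part of `B`:  `𝓕ᵢ = IDcont(B)·𝓛ᵢ` with `𝓛₁,…,𝓛ₙ`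
coprime and `B' = ∑ 𝓛ᵢ(xᵢ - aᵢ)`. -/
def IsIDPrimPart (S : Sys K n) (B B' : R K n) : Prop :=
  ∃ (Lop : Polynomial K) (Lfam : Fin n → Polynomial K),
    (∀ i f, S.applyOp (S.opOf B i) f = S.applyOp Lop (S.applyOp (Lfam i) f)) ∧
    (∀ Q : Polynomial K, (∀ i, S.leftDvd Q (Lfam i)) → Q.natDegree = 0) ∧
    B' = ∑ i, S.applyOp (Lfam i) (X (Sum.inl i, 0) - C (S.a i))

/-- The co-order of `B` in `(PS)`: the greatest `c` with `∂^c B ∈ (PS)`. -/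
noncomputable def coOrd (S : Sys K n) (B : R K n) : ℕ :=
  sSup {c : ℕ | S.PSIdealMem ((⇑S.D)^[c] B)}

/-- The leading coefficients vector `l(B) = (α₁,…,αₙ)`, `αᵢ` the coefficient of
`∂^{N - oᵢ - γ - c(B)}` in `𝓕ᵢ`. -/
noncomputable def lvec (S : Sys K n) (B : R K n) : Fin n → K :=
  fun i => cf B (Sum.inl i) (S.Nn - S.o i - S.gamT - S.coOrd B)

/-- The leading matrix `S` of the system: entry `(i,j)` is the coefficient of
`u_{n-j, oᵢ - γ_{n-j}}` in `Fᵢ`. -/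
noncomputable def Smat (S : Sys K n) : Matrix (Fin n) (Fin (n - 1)) K :=
  Matrix.of fun i j =>
    if S.gam j.rev ≤ S.o i then cf (S.F i) (Sum.inr j.rev) (S.o i - S.gam j.rev) else 0

/-- Row indices of the complete differential resultant matrix `M(L)`. -/
abbrev RI (S : Sys K n) := (i : Fin n) × Fin (S.Nn - S.o i - S.gamT + 1)

/-- Column indices corresponding to the variables `𝒱`. -/
abbrev CI (S : Sys K n) := (j : Fin (n - 1)) × Fin (S.Nn - S.gam j - S.gamT + 1)

/-- The principal matrix `M_{L-1}` of the system. -/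
noncomputable def Mprin (S : Sys K n) : Matrix S.RI S.CI K :=
  Matrix.of fun ik jm => cf ((⇑S.D)^[(ik.2 : ℕ)] (S.F ik.1)) (Sum.inr jm.1) (jm.2 : ℕ)

/-- The complete differential resultant matrix `M(L)` (last column holds the parts
`x_{ik} - ∂^k aᵢ`). -/
noncomputable def Mfull (S : Sys K n) : Matrix S.RI (S.CI ⊕ Unit) (R K n) :=
  Matrix.of fun ik c =>
    Sum.elim
      (fun jm => (C (cf ((⇑S.D)^[(ik.2 : ℕ)] (S.F ik.1)) (Sum.inr jm.1) (jm.2 : ℕ)) : R K n))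
      (fun _ => X (Sum.inl ik.1, (ik.2 : ℕ)) - C ((⇑S.der)^[(ik.2 : ℕ)] (S.a ik.1))) c

/-- The linear complete differential resultant `∂CRes(F₁,…,Fₙ) = det M(L)`. -/
noncomputable def dCRes (S : Sys K n) : R K n :=
  if h : Fintype.card (S.CI ⊕ Unit) = Fintype.card S.RI then
    (S.Mfull.submatrix (Fintype.equivOfCardEq h) id).det
  else 0

/-- `G` is the (reduced) Groebner basis associated to the system `𝒫(X,U)`,
w.r.t. the lex monomial order induced by the ranking `R*`. -/
def IsAssocGB (S : Sys K n) (G : Finset (R K n)) : Prop :=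
  (∀ g ∈ G, g ≠ 0 ∧ IsLinearPoly g ∧ S.inXV g ∧ g ∈ Ideal.span S.PSset) ∧
  Ideal.span (G : Set (R K n)) = Ideal.span S.PSset ∧
  (∀ g ∈ G, ∃ v : Vr n, IsLead g v ∧ cf g v.1 v.2 = 1 ∧ ∀ g' ∈ G, g' ≠ g → v ∉ g'.vars) ∧
  (∀ f : R K n, f ∈ Ideal.span S.PSset → S.inXV f → IsLinearPoly f → f ≠ 0 →
    ∃ g ∈ G, ∃ v : Vr n, IsLead g v ∧ IsLead f v)

end Sys

/-- `G₀ = G ∩ K{X}`. -/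
noncomputable def G0 (G : Finset (R K n)) : Finset (R K n) :=
  @Finset.filter _ (fun g => xOnly g) (Classical.decPred _) G


end DPPE

/-!
Let `x_{i₁,t}` be a derivative of highest order `t` in `B`. Differentiating a linear polynomial
never cancels its top derivative in a given indeterminate, so `∂ᶜB` contains `x_{i₁,t+c}` and no
derivative of order above `t + c`. Writing `B = ∑ 𝓕ᵢ Fᵢ` (the coefficients are forced, because
`(PS) ∩ K{U} = 0`) shows that `∂ᶜB ∈ (PS)` as soon as `ord(B, xᵢ) + c ≤ N - oᵢ - γ` for all `i`,
which holds for every `c ≤ c(B)`. Hence each `∂ᶜB`, `c = 0, …, c(B)`, shares its lead with some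
`g_c ∈ G`. Since `R*` ranks every `u`-derivative above every `x`-derivative, and `x`-derivatives
by order first, that lead is an `x`-derivative of order `t + c`: so `g_c ∈ G₀`, and the `g_c`
have pairwise distinct leads.
-/

namespace MvPolynomial

variable {σ A : Type*} [CommSemiring A] {f : MvPolynomial σ A}

lemma eq_zero_or_eq_single_of_mem_support (hf : f.totalDegree ≤ 1) {d : σ →₀ ℕ}
    (hd : d ∈ f.support) : d = 0 ∨ ∃ w, d = Finsupp.single w 1 := by
  rcases Nat.le_one_iff_eq_zero_or_eq_one.mp ((le_totalDegree hd).trans hf) with h | h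
  · exact .inl ((Finsupp.degree_eq_zero_iff d).mp h)
  · exact .inr ((Finsupp.sum_eq_one_iff d).mp h)

lemma mem_vars_of_coeff_single_ne_zero {w : σ} (h : coeff (Finsupp.single w 1) f ≠ 0) :
    w ∈ f.vars :=
  (mem_vars_iff_mem_support w).mpr ⟨_, mem_support_iff.mpr h, by simp⟩

lemma coeff_single_ne_zero_of_mem_vars (hf : f.totalDegree ≤ 1) {w : σ} (h : w ∈ f.vars) :
    coeff (Finsupp.single w 1) f ≠ 0 := by
  obtain ⟨d, hd, hwd⟩ := (mem_vars_iff_mem_support w).mp h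
  rcases eq_zero_or_eq_single_of_mem_support hf hd with rfl | ⟨w', rfl⟩
  · simp at hwd
  · obtain rfl : w = w' := by simpa using Finsupp.support_single_subset hwd
    exact mem_support_iff.mp hd

lemma eq_C_add_sum_vars (hf : f.totalDegree ≤ 1) :
    f = C (coeff 0 f) + ∑ w ∈ f.vars, C (coeff (Finsupp.single w 1) f) * X w := by
  classical
  have hsub : f.support ⊆ insert 0 (f.vars.image fun w => Finsupp.single w 1) := by
    intro d hd
    rcases eq_zero_or_eq_single_of_mem_support hf hd with rfl | ⟨w, rfl⟩
    · exact Finset.mem_insert_self _ _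
    · exact Finset.mem_insert_of_mem
        (Finset.mem_image_of_mem _ ((mem_vars_iff_mem_support w).mpr ⟨_, hd, by simp⟩))
  have h0 : (0 : σ →₀ ℕ) ∉ f.vars.image fun w => Finsupp.single w 1 := by simp
  calc f = ∑ d ∈ insert 0 (f.vars.image fun w => Finsupp.single w 1), monomial d (coeff d f) :=
        f.as_sum.trans <| Finset.sum_subset hsub fun d _ hd => by
          rw [notMem_support_iff.mp hd, map_zero]
    _ = _ := by
      rw [Finset.sum_insert h0,
        Finset.sum_image fun w _ w' _ h => Finsupp.single_left_injective one_ne_zero h]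
      simp only [C_mul_X_eq_monomial, monomial_zero']

end MvPolynomial

namespace DPPE

variable {K : Type} [Field K] {n : ℕ}

lemma cf_C_mul_X {A : Type} [CommSemiring A] (a : A) (v : Vr n) (u : Fin n ⊕ Fin (n - 1))
    (k : ℕ) : cf (C a * X v : MvPolynomial (Vr n) A) u k = if v = (u, k) then a else 0 := by
  rw [cf, C_mul_X_eq_monomial, coeff_monomial]
  exact if_congr (Finsupp.single_left_inj one_ne_zero) rfl rfl

lemma cf_C {A : Type} [CommSemiring A] (a : A) (u : Fin n ⊕ Fin (n - 1)) (k : ℕ) :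
    cf (C a : MvPolynomial (Vr n) A) u k = 0 := by
  rw [cf, coeff_C, if_neg (Finsupp.single_ne_zero.mpr one_ne_zero).symm]

lemma rkk_inl (i : Fin n) (k : ℕ) :
    rkk ((Sum.inl i, k) : Vr n) = toLex (false, toLex (k, (i.rev : ℕ))) := rfl

lemma rkk_inr (j : Fin (n - 1)) (k : ℕ) :
    rkk ((Sum.inr j, k) : Vr n) = toLex (true, toLex (k, (j : ℕ))) := rfl

lemma not_rkk_inr_le_inl (j : Fin (n - 1)) (i : Fin n) (k k' : ℕ) :
    ¬ rkk ((Sum.inr j, k) : Vr n) ≤ rkk (Sum.inl i, k') := by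
  simp [rkk_inl, rkk_inr, Prod.Lex.toLex_le_toLex]

lemma le_of_rkk_inl_le {i i' : Fin n} {k k' : ℕ}
    (h : rkk ((Sum.inl i, k) : Vr n) ≤ rkk (Sum.inl i', k')) : k ≤ k' := by
  simp only [rkk_inl, Prod.Lex.toLex_le_toLex, lt_self_iff_false, true_and, false_or] at h
  omega

namespace Sys

variable (S : Sys K n)

lemma iterate_D_C (b : K) (k : ℕ) : (⇑S.D)^[k] (C b) = C ((⇑S.der)^[k] b) :=
  ((Function.Semiconj.iterate_right (f := C) (fun b => (S.hD_C b).symm) k) b).symm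

lemma iterate_D_X (w : Vr n) (s : ℕ) : (⇑S.D)^[s] (X w) = X (w.1, w.2 + s) := by
  induction s with
  | zero => rfl
  | succ s ih => rw [Function.iterate_succ_apply', ih, S.hD_X, add_assoc]

lemma iterate_D_sum {ι : Type*} (k : ℕ) (s : Finset ι) (g : ι → R K n) :
    (⇑S.D)^[k] (∑ i ∈ s, g i) = ∑ i ∈ s, (⇑S.D)^[k] (g i) := by
  rw [← Derivation.coeFn_coe, ← Module.End.coe_pow, map_sum]

lemma iterate_D_C_mul (b : K) (g : R K n) (c : ℕ) :
    ∃ a : ℕ → K, a c = b ∧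
      (⇑S.D)^[c] (C b * g) = ∑ s ∈ Finset.range (c + 1), C (a s) * (⇑S.D)^[s] g := by
  induction c with
  | zero => exact ⟨fun _ => b, rfl, by simp⟩
  | succ c ih =>
    obtain ⟨a, hac, hrep⟩ := ih
    refine ⟨fun s => (if s ≤ c then S.der (a s) else 0) + (if s = 0 then 0 else a (s - 1)),
      by simp [hac], ?_⟩
    have hD : ∀ s, S.D (C (a s) * (⇑S.D)^[s] g) =
        C (S.der (a s)) * (⇑S.D)^[s] g + C (a s) * (⇑S.D)^[s + 1] g := fun s => by
      rw [Derivation.leibniz, smul_eq_mul, smul_eq_mul, S.hD_C, Function.iterate_succ_apply']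
      ring
    rw [Function.iterate_succ_apply', hrep, map_sum]
    simp only [hD, Finset.sum_add_distrib, map_add, add_mul, apply_ite C, map_zero, ite_mul,
      zero_mul]
    congr 1
    · rw [Finset.sum_range_succ _ (c + 1), if_neg (by omega), add_zero]
      exact Finset.sum_congr rfl fun s hs => (if_pos (Finset.mem_range_succ_iff.mp hs)).symm
    · rw [Finset.sum_range_succ' _ (c + 1), if_pos rfl, add_zero]
      simp

lemma iterate_D_eq_of_isLinearPoly {f : R K n} (hf : IsLinearPoly f) (c : ℕ) :
    ∃ a : Vr n → ℕ → K, (∀ w, a w c = cf f w.1 w.2) ∧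
      (⇑S.D)^[c] f = C ((⇑S.der)^[c] (coeff 0 f)) +
        ∑ w ∈ f.vars, ∑ s ∈ Finset.range (c + 1), C (a w s) * X (w.1, w.2 + s) := by
  choose a ha hrep using fun w : Vr n => S.iterate_D_C_mul (cf f w.1 w.2) (X w) c
  refine ⟨a, ha, ?_⟩
  conv_lhs => rw [eq_C_add_sum_vars hf]
  rw [iterate_map_add, S.iterate_D_sum, S.iterate_D_C]
  congr 1
  refine Finset.sum_congr rfl fun w _ => (hrep w).trans ?_
  simp only [S.iterate_D_X]

lemma vars_iterate_D {f : R K n} (hf : IsLinearPoly f) {c : ℕ} {v : Vr n}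
    (hv : v ∈ ((⇑S.D)^[c] f).vars) : ∃ w ∈ f.vars, ∃ s ≤ c, v = (w.1, w.2 + s) := by
  obtain ⟨a, -, hrep⟩ := S.iterate_D_eq_of_isLinearPoly hf c
  rw [hrep] at hv
  have hv := vars_add_subset _ _ hv
  rw [vars_C, Finset.empty_union] at hv
  obtain ⟨w, hw, hv⟩ := Finset.mem_biUnion.mp (vars_sum_subset _ _ hv)
  obtain ⟨s, hs, hv⟩ := Finset.mem_biUnion.mp (vars_sum_subset _ _ hv)
  have hv := vars_mul _ _ hv
  rw [vars_C, vars_X, Finset.empty_union, Finset.mem_singleton] at hv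
  exact ⟨w, hw, s, Finset.mem_range_succ_iff.mp hs, hv⟩

lemma isLinearPoly_iterate_D {f : R K n} (hf : IsLinearPoly f) (c : ℕ) :
    IsLinearPoly ((⇑S.D)^[c] f) := by
  obtain ⟨a, -, hrep⟩ := S.iterate_D_eq_of_isLinearPoly hf c
  rw [IsLinearPoly, hrep]
  refine (totalDegree_add _ _).trans (max_le (by simp) ?_)
  refine (totalDegree_finsetSum _ _).trans (Finset.sup_le fun w _ => ?_)
  refine (totalDegree_finsetSum _ _).trans (Finset.sup_le fun s _ => ?_)
  exact (totalDegree_mul _ _).trans (by simp [totalDegree_X])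

lemma cf_iterate_D_of_top {f : R K n} (hf : IsLinearPoly f) {v : Fin n ⊕ Fin (n - 1)}
    {T : ℕ} (hT : (v, T) ∈ f.vars) (hmax : ∀ k, (v, k) ∈ f.vars → k ≤ T) (c : ℕ) :
    cf ((⇑S.D)^[c] f) v (T + c) = cf f v T := by
  obtain ⟨a, hac, hrep⟩ := S.iterate_D_eq_of_isLinearPoly hf c
  have hterm : ∀ w ∈ f.vars, ∀ s ∈ Finset.range (c + 1),
      cf (C (a w s) * X (w.1, w.2 + s) : R K n) v (T + c) =
        if w = (v, T) then (if s = c then cf f v T else 0) else 0 := by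
    intro w hw s hs
    rw [cf_C_mul_X]
    by_cases hwT : w = (v, T)
    · subst hwT
      simp only [Prod.mk.injEq, add_right_inj, true_and, if_true]
      split_ifs with hsc
      · rw [hsc, hac]
      · rfl
    · rw [if_neg hwT, if_neg]
      rintro h
      obtain ⟨hv, hk⟩ := Prod.mk.injEq _ _ _ _ ▸ h
      have hwT' : w.2 ≤ T := hmax _ (by rw [← hv]; exact hw)
      have hsc : s ≤ c := Finset.mem_range_succ_iff.mp hs
      exact hwT (Prod.ext hv (by omega))
  calc cf ((⇑S.D)^[c] f) v (T + c)
      = cf (C ((⇑S.der)^[c] (coeff 0 f)) : R K n) v (T + c) +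
          ∑ w ∈ f.vars, ∑ s ∈ Finset.range (c + 1),
            cf (C (a w s) * X (w.1, w.2 + s) : R K n) v (T + c) := by
        rw [hrep]
        simp only [cf, coeff_add, coeff_sum]
    _ = cf f v T := by
        rw [cf_C, zero_add, Finset.sum_congr rfl fun w hw => Finset.sum_congr rfl (hterm w hw)]
        simp [hT]

lemma mem_vars_iterate_D_of_top {f : R K n} (hf : IsLinearPoly f) {v : Fin n ⊕ Fin (n - 1)}
    {T : ℕ} (hT : (v, T) ∈ f.vars) (hmax : ∀ k, (v, k) ∈ f.vars → k ≤ T) (c : ℕ) :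
    (v, T + c) ∈ ((⇑S.D)^[c] f).vars := by
  refine mem_vars_of_coeff_single_ne_zero ?_
  rw [← cf, S.cf_iterate_D_of_top hf hT hmax c]
  exact coeff_single_ne_zero_of_mem_vars hf hT

lemma subst_C (b : K) : S.subst (C b) = C b := by
  rw [subst, aeval_C, algebraMap_eq]

lemma subst_D (f : R K n) : S.subst (S.D f) = S.D (S.subst f) := by
  induction f using MvPolynomial.induction_on with
  | C c => rw [S.hD_C, S.subst_C, S.subst_C, S.hD_C]
  | add p q hp hq => rw [map_add, map_add, hp, hq, map_add, map_add]
  | mul_X p w hp =>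
    obtain ⟨v, k⟩ := w
    have hX : S.subst (X (v, k + 1)) = S.D (S.subst (X (v, k))) := by
      cases v <;> simp [subst, Function.iterate_succ_apply', S.hD_X]
    rw [Derivation.leibniz, smul_eq_mul, smul_eq_mul, map_add, map_mul, map_mul, hp, S.hD_X, hX,
      map_mul, Derivation.leibniz, smul_eq_mul, smul_eq_mul]

lemma subst_iterate_D (f : R K n) (k : ℕ) :
    S.subst ((⇑S.D)^[k] f) = (⇑S.D)^[k] (S.subst f) :=
  Function.Semiconj.iterate_right (f := S.subst) S.subst_D k f

lemma subst_eq_self_of_uOnly {f : R K n} (h : uOnly f) : S.subst f = f := by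
  refine hom_congr_vars (f₁ := S.subst.toRingHom) (f₂ := RingHom.id _)
    (RingHom.ext S.subst_C) (fun w hw _ => ?_) rfl
  obtain ⟨j, hj⟩ := Sum.isRight_iff.mp (h w hw)
  obtain ⟨v, k⟩ := w
  subst hj
  simp [subst]

lemma subst_F (i : Fin n) : S.subst (S.F i) = 0 := by
  rw [F, map_add, map_sub, S.subst_C, S.subst_eq_self_of_uOnly (S.H_u i)]
  simp [subst]

lemma subst_eq_zero_of_mem_span {f : R K n} (h : f ∈ Ideal.span S.PSset) : S.subst f = 0 := by
  refine Submodule.span_induction ?_ (map_zero _)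
    (fun _ _ _ _ hx hy => by rw [map_add, hx, hy, add_zero])
    (fun a _ _ hx => by rw [smul_eq_mul, map_mul, hx, mul_zero]) h
  rintro _ ⟨i, k, -, rfl⟩
  rw [S.subst_iterate_D, S.subst_F, iterate_map_zero]

lemma eq_zero_of_uOnly_of_mem_span {f : R K n} (hu : uOnly f) (h : f ∈ Ideal.span S.PSset) :
    f = 0 :=
  (S.subst_eq_self_of_uOnly hu).symm.trans (S.subst_eq_zero_of_mem_span h)

lemma uOnly_iff_mem_supported {f : R K n} :
    uOnly f ↔ f ∈ supported K {w : Vr n | w.1.isRight} :=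
  mem_supported.symm

lemma uOnly_iterate_D_H (i : Fin n) (k : ℕ) : uOnly ((⇑S.D)^[k] (S.H i)) := by
  intro w hw
  obtain ⟨w', hw', s, -, rfl⟩ := S.vars_iterate_D (S.H_hom i).totalDegree_le hw
  exact S.H_u i w' hw'

lemma X_sub_iterate_D_F (i : Fin n) (k : ℕ) :
    X (Sum.inl i, k) - (⇑S.D)^[k] (S.F i) = C ((⇑S.der)^[k] (S.a i)) - (⇑S.D)^[k] (S.H i) := by
  simp only [F, iterate_map_add, iterate_map_sub, S.iterate_D_C, S.iterate_D_X, zero_add]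
  ring

lemma eq_sum_coeff_mul_iterate_D_F {f : R K n} (hlin : IsLinearPoly f)
    (hspan : f ∈ Ideal.span S.PSset) (hXV : S.inXV f) :
    f = ∑ w ∈ f.vars, C (coeff (Finsupp.single w 1) f) *
      Sum.elim (fun i => (⇑S.D)^[w.2] (S.F i)) (fun _ => 0) w.1 := by
  set Q := ∑ w ∈ f.vars, C (coeff (Finsupp.single w 1) f) *
    Sum.elim (fun i => (⇑S.D)^[w.2] (S.F i)) (fun _ => 0) w.1
  have hQ : Q ∈ Ideal.span S.PSset := Ideal.sum_mem _ fun w hw => by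
    obtain ⟨v | v, k⟩ := w
    · exact Ideal.mul_mem_left _ _ (Ideal.subset_span ⟨v, k, hXV _ hw, rfl⟩)
    · simp
  have hfQ : f - Q = C (coeff 0 f) + ∑ w ∈ f.vars, C (coeff (Finsupp.single w 1) f) *
      (X w - Sum.elim (fun i => (⇑S.D)^[w.2] (S.F i)) (fun _ => 0) w.1) := by
    conv_lhs => rw [eq_C_add_sum_vars hlin]
    rw [add_sub_assoc, ← Finset.sum_sub_distrib]
    simp only [mul_sub]
  have hC : ∀ b : K, C b ∈ supported K {w : Vr n | w.1.isRight} :=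
    fun b => mem_supported.mpr (by simp)
  have hu : uOnly (f - Q) := by
    rw [uOnly_iff_mem_supported, hfQ]
    refine add_mem (hC _) (Subalgebra.sum_mem _ fun w _ => Subalgebra.mul_mem _ (hC _) ?_)
    obtain ⟨v | v, k⟩ := w
    · rw [Sum.elim_inl, S.X_sub_iterate_D_F]
      exact Subalgebra.sub_mem _ (hC _) (uOnly_iff_mem_supported.mp (S.uOnly_iterate_D_H v k))
    · rw [Sum.elim_inr, sub_zero]
      exact X_mem_supported.mpr rfl
  exact sub_eq_zero.mp (S.eq_zero_of_uOnly_of_mem_span hu (Ideal.sub_mem _ hspan hQ))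

lemma iterate_D_mem_span {f : R K n} (hlin : IsLinearPoly f) (hspan : f ∈ Ideal.span S.PSset)
    (hXV : S.inXV f) {c : ℕ}
    (hc : ∀ i k, (Sum.inl i, k) ∈ f.vars → k + c ≤ S.Nn - S.o i - S.gamT) :
    (⇑S.D)^[c] f ∈ Ideal.span S.PSset := by
  rw [S.eq_sum_coeff_mul_iterate_D_F hlin hspan hXV, S.iterate_D_sum]
  refine Ideal.sum_mem _ fun w hw => ?_
  obtain ⟨v | v, k⟩ := w
  · obtain ⟨a, -, ha⟩ := S.iterate_D_C_mul (coeff (Finsupp.single (Sum.inl v, k) 1) f)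
      ((⇑S.D)^[k] (S.F v)) c
    rw [Sum.elim_inl, ha]
    refine Ideal.sum_mem _ fun s hs => Ideal.mul_mem_left _ _ (Ideal.subset_span ?_)
    have := hc v k hw
    have := Finset.mem_range.mp hs
    exact ⟨v, s + k, by omega, (Function.iterate_add_apply _ _ _ _).symm⟩
  · simp

lemma inXV_iterate_D {f : R K n} (hlin : IsLinearPoly f) (hx : xOnly f) {c : ℕ}
    (hc : ∀ i k, (Sum.inl i, k) ∈ f.vars → k + c ≤ S.Nn - S.o i - S.gamT) :
    S.inXV ((⇑S.D)^[c] f) := by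
  intro w hw
  obtain ⟨⟨v, k⟩, hvk, s, hs, rfl⟩ := S.vars_iterate_D hlin hw
  obtain ⟨i, rfl⟩ := Sum.isLeft_iff.mp (hx _ hvk)
  have := hc i k hvk
  simp only [Sum.elim_inl]
  omega

lemma exists_mem_vars_iterate_D {f : R K n} (hlin : IsLinearPoly f)
    {v : Fin n ⊕ Fin (n - 1)} {k : ℕ} (hk : (v, k) ∈ f.vars) (c : ℕ) :
    ∃ T, k ≤ T ∧ (v, T + c) ∈ ((⇑S.D)^[c] f).vars := by
  classical
  obtain ⟨⟨v', T⟩, hT, hmax⟩ := (f.vars.filter (·.1 = v)).exists_max_image Prod.snd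
    ⟨_, Finset.mem_filter.mpr ⟨hk, rfl⟩⟩
  obtain ⟨hTf, rfl⟩ := Finset.mem_filter.mp hT
  have hmax' : ∀ k', (v', k') ∈ f.vars → k' ≤ T :=
    fun k' hk' => hmax (v', k') (Finset.mem_filter.mpr ⟨hk', rfl⟩)
  exact ⟨T, hmax' k hk, S.mem_vars_iterate_D_of_top hlin hTf hmax' c⟩

lemma iterate_D_ne_zero {f : R K n} (hlin : IsLinearPoly f) {w : Vr n} (hw : w ∈ f.vars)
    (c : ℕ) : (⇑S.D)^[c] f ≠ 0 := by
  obtain ⟨T, -, hT⟩ := S.exists_mem_vars_iterate_D hlin hw c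
  rintro h
  simp [h] at hT

lemma add_le_of_inXV_iterate_D {f : R K n} (hlin : IsLinearPoly f) {c : ℕ}
    (hXV : S.inXV ((⇑S.D)^[c] f)) :
    ∀ i k, (Sum.inl i, k) ∈ f.vars → k + c ≤ S.Nn - S.o i - S.gamT := by
  intro i k hk
  obtain ⟨T, hkT, hT⟩ := S.exists_mem_vars_iterate_D hlin hk c
  have := hXV _ hT
  simp only [Sum.elim_inl] at this
  omega

lemma vars_nonempty_of_mem_span {f : R K n} (h0 : f ≠ 0) (h : f ∈ Ideal.span S.PSset) :
    f.vars.Nonempty := by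
  by_contra hne
  rw [Finset.not_nonempty_iff_eq_empty] at hne
  exact h0 (S.eq_zero_of_uOnly_of_mem_span (fun w hw => by simp [hne] at hw) h)

lemma PSIdealMem_iterate_D_of_le_coOrd {f : R K n} (hlin : IsLinearPoly f) (hx : xOnly f)
    (hPS : S.PSIdealMem f) (hne : f.vars.Nonempty) {c : ℕ} (hc : c ≤ S.coOrd f) :
    S.PSIdealMem ((⇑S.D)^[c] f) := by
  have hbound := fun c' (h : S.PSIdealMem ((⇑S.D)^[c'] f)) => S.add_le_of_inXV_iterate_D hlin h.2
  have hmem : S.PSIdealMem ((⇑S.D)^[S.coOrd f] f) := by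
    obtain ⟨⟨v, k⟩, hw⟩ := hne
    obtain ⟨i, rfl⟩ := Sum.isLeft_iff.mp (hx _ hw)
    exact Nat.sSup_mem ⟨0, hPS⟩ ⟨S.Nn, fun c' h => by have := hbound c' h i k hw; omega⟩
  have hc' : ∀ i k, (Sum.inl i, k) ∈ f.vars → k + c ≤ S.Nn - S.o i - S.gamT :=
    fun i k hk => (Nat.add_le_add_left hc k).trans (hbound _ hmem i k hk)
  exact ⟨S.iterate_D_mem_span hlin hPS.1 hPS.2 hc', S.inXV_iterate_D hlin hx hc'⟩

lemma exists_eq_inl_of_isLead_iterate_D {f : R K n} (hlin : IsLinearPoly f) (hx : xOnly f)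
    {i₁ : Fin n} {t : ℕ} (ht : (Sum.inl i₁, t) ∈ f.vars) (htop : ∀ w ∈ f.vars, w.2 ≤ t)
    {c : ℕ} {v : Vr n} (hv : IsLead ((⇑S.D)^[c] f) v) : ∃ i, v = (Sum.inl i, t + c) := by
  obtain ⟨w, hw, s, hs, rfl⟩ := S.vars_iterate_D hlin hv.1
  obtain ⟨i, hi⟩ := Sum.isLeft_iff.mp (hx w hw)
  have htc := hv.2 _ (S.mem_vars_iterate_D_of_top hlin ht (fun k hk => htop _ hk) c)
  rw [hi] at htc
  have := htop w hw
  exact ⟨i, Prod.ext hi (le_antisymm (by omega) (le_of_rkk_inl_le htc))⟩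

end Sys

lemma IsLead.xOnly {g : R K n} {i : Fin n} {k : ℕ} (h : IsLead g (Sum.inl i, k)) : xOnly g := by
  rintro ⟨v | j, k'⟩ hw
  · rfl
  · exact absurd (h.2 _ hw) (not_rkk_inr_le_inl j i k' k)

lemma IsLead.snd_eq {g : R K n} {i i' : Fin n} {k k' : ℕ} (h : IsLead g (Sum.inl i, k))
    (h' : IsLead g (Sum.inl i', k')) : k = k' :=
  le_antisymm (le_of_rkk_inl_le (h'.2 _ h.1)) (le_of_rkk_inl_le (h.2 _ h'.1))

/-- For every nonzero linear differential polynomial `B` in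
`(G₀) = (PS) ∩ K{X}`, the number of elements of `G₀` satisfies `|G₀| ≥ c(B) + 1`,
where `c(B)` is the co-order of `B` in `(PS)`. -/
theorem statement_4 {K : Type} [Field K] {n : ℕ} (S : Sys K n) (G : Finset (R K n))
    (hG : S.IsAssocGB G) (B : R K n) (hB0 : B ≠ 0) (hBlin : IsLinearPoly B)
    (hBPS : S.PSIdealMem B) (hBx : xOnly B) :
    S.coOrd B + 1 ≤ (G0 G).card := by
  classical
  obtain ⟨-, -, -, hGlead⟩ := hG
  obtain ⟨⟨v₁, t⟩, hw₁, htop⟩ :=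
    B.vars.exists_max_image Prod.snd (S.vars_nonempty_of_mem_span hB0 hBPS.1)
  obtain ⟨i₁, rfl⟩ := Sum.isLeft_iff.mp (hBx _ hw₁)
  have hg : ∀ c ≤ S.coOrd B, ∃ g ∈ G0 G, ∃ i, IsLead g (Sum.inl i, t + c) := by
    intro c hc
    have hPS := S.PSIdealMem_iterate_D_of_le_coOrd hBlin hBx hBPS ⟨_, hw₁⟩ hc
    obtain ⟨g, hgG, v, hgv, hBv⟩ := hGlead _ hPS.1 hPS.2 (S.isLinearPoly_iterate_D hBlin c)
      (S.iterate_D_ne_zero hBlin hw₁ c)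
    obtain ⟨i, rfl⟩ := S.exists_eq_inl_of_isLead_iterate_D hBlin hBx hw₁ htop hBv
    exact ⟨g, Finset.mem_filter.mpr ⟨hgG, hgv.xOnly⟩, i, hgv⟩
  choose! g hgG i hgi using hg
  calc S.coOrd B + 1 = (Finset.range (S.coOrd B + 1)).card := (Finset.card_range _).symm
    _ ≤ (G0 G).card := by
      refine Finset.card_le_card_of_injOn g (fun c hc => hgG c (Finset.mem_range_succ_iff.mp hc))
        fun c hc c' hc' h => ?_
      have := (hgi c (Finset.mem_range_succ_iff.mp hc)).snd_eq
        (h ▸ hgi c' (Finset.mem_range_succ_iff.mp hc'))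
      omega

end DPPE
end

section
/- Let A be a nonzero linear ID-primitive differential polynomial in (G₀) with |G₀| = c(A) + 1, and suppose rank(S) = n − 1. Given B ∈ G \ G₀, suppose there exists a positive integer e_B with 1 ≤ e_B ≤ c(A) and ord(B,u_j) ≤ N − γ_j − γ − e_B for all j = 1,…,n−1. Then there exists B̄ ∈ (G₀) such that c(B − B̄) ≥ e_B. -/
/-!
A linear element `P` of `(PS)` equals `∑ cf(P, x_{i,k}) ∂ᵏFᵢ` over `k ≤ N - oᵢ - γ`: substituting
`x_{i,k} ↦ ∂ᵏPᵢ` for exactly these `k` kills `(PS)` and fixes the difference of the two sides.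
If moreover the `xᵢ`-orders of `P` are at most `N - oᵢ - γ - s`, only `∂^{N - oᵢ - γ - s}Fᵢ`
reaches `u_{j, N - γⱼ - γ - s}`, so the coefficients of these `u`'s in `P` are the entries of
`α S`, where `α` is the vector of coefficients of the `x_{i, N - oᵢ - γ - s}` in `P`.
For `A` at depth `s = c(A)` the `u`-coefficients vanish and `α ≠ 0` by maximality of `c(A)`;
as `rank S = n - 1`, this `α` spans the left kernel of `S`. For `B` at the depths `s < e_B` the
order bound kills the `u`-coefficients, so `B`'s vector is `λ α`, and subtracting `λ ∂^{c(A)-s} A`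
lowers every `xᵢ`-order by one. After these layers `R = B - B̄` satisfies `∂^{e_B} R ∈ (PS)`.
-/

open MvPolynomial

namespace DPPE

variable {K : Type} [Field K] {n : ℕ}

theorem _root_.Finsupp.eq_single_of_degree_le_one {σ : Type*} {s : σ →₀ ℕ} {w : σ}
    (hs : s.degree ≤ 1) (hw : s w ≠ 0) : s = Finsupp.single w 1 := by
  have hle : Finsupp.single w 1 ≤ s := Finsupp.single_le_iff.mpr (Nat.one_le_iff_ne_zero.mpr hw)
  have hdeg := congrArg Finsupp.degree (tsub_add_cancel_of_le hle)
  rw [map_add, Finsupp.degree_single] at hdeg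
  have hzero : s - Finsupp.single w 1 = 0 := (Finsupp.degree_eq_zero_iff _).mp (by omega)
  rw [← tsub_add_cancel_of_le hle, hzero, zero_add]

open scoped Matrix in
theorem _root_.Matrix.exists_eq_smul_of_vecMul_eq_zero {ι κ K : Type*} [Fintype ι] [Fintype κ]
    [Field K] {M : Matrix ι κ K} (hM : M.rank = Fintype.card ι - 1) {a w : ι → K}
    (ha : a ≠ 0) (haM : a ᵥ* M = 0) (hwM : w ᵥ* M = 0) : ∃ c : K, w = c • a := by
  have hker : ∀ x : ι → K, x ᵥ* M = 0 → x ∈ LinearMap.ker Mᵀ.mulVecLin := fun x hx => by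
    rwa [LinearMap.mem_ker, Matrix.mulVecLin_apply, Matrix.mulVec_transpose]
  have hcard : 0 < Fintype.card ι := by
    obtain ⟨i, -⟩ := Function.ne_iff.mp ha
    exact Fintype.card_pos_iff.mpr ⟨i⟩
  have hdim : Module.finrank K (LinearMap.ker Mᵀ.mulVecLin) = 1 := by
    have h := LinearMap.finrank_range_add_finrank_ker Mᵀ.mulVecLin
    rw [Module.finrank_fintype_fun_eq_card, ← Matrix.rank, Matrix.rank_transpose, hM] at h
    omega
  obtain ⟨c, hc⟩ := (finrank_eq_one_iff_of_nonzero' (⟨a, hker a haM⟩ : LinearMap.ker _)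
    (by simpa using ha)).mp hdim ⟨w, hker w hwM⟩
  exact ⟨c, (congrArg Subtype.val hc).symm⟩

section Coefficients

variable {f g : R K n} {v : Fin n ⊕ Fin (n - 1)} {k : ℕ}

@[simp] theorem cf_add (f g : R K n) (v : Fin n ⊕ Fin (n - 1)) (k : ℕ) :
    cf (f + g) v k = cf f v k + cf g v k := coeff_add _ _ _

@[simp] theorem cf_sub (f g : R K n) (v : Fin n ⊕ Fin (n - 1)) (k : ℕ) :
    cf (f - g) v k = cf f v k - cf g v k := coeff_sub _ _ _ _

@[simp] theorem cf_smul (c : K) (f : R K n) (v : Fin n ⊕ Fin (n - 1)) (k : ℕ) :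
    cf (c • f) v k = c * cf f v k := coeff_smul _ _ _

theorem cf_sum {ι : Type*} (s : Finset ι) (f : ι → R K n) (v : Fin n ⊕ Fin (n - 1)) (k : ℕ) :
    cf (∑ i ∈ s, f i) v k = ∑ i ∈ s, cf (f i) v k := coeff_sum _ _ _

@[simp] theorem cf_C_s9 (c : K) (v : Fin n ⊕ Fin (n - 1)) (k : ℕ) : cf (C c : R K n) v k = 0 := by
  rw [cf, coeff_C, if_neg (Finsupp.single_ne_zero.mpr one_ne_zero).symm]

theorem mem_vars_of_cf_ne_zero (h : cf f v k ≠ 0) : (v, k) ∈ f.vars :=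
  (mem_vars_iff_mem_support _).mpr ⟨_, mem_support_iff.mpr h, by simp⟩

theorem cf_inr_eq_zero_of_xOnly (hf : xOnly f) (j : Fin (n - 1)) (m : ℕ) :
    cf f (Sum.inr j) m = 0 := by
  by_contra h
  simpa using hf _ (mem_vars_of_cf_ne_zero h)

theorem cf_inl_eq_zero_of_uOnly (hf : uOnly f) (i : Fin n) (m : ℕ) :
    cf f (Sum.inl i) m = 0 := by
  by_contra h
  simpa using hf _ (mem_vars_of_cf_ne_zero h)

theorem IsLinearPoly.eq_single_of_mem_support (hf : IsLinearPoly f) {s : Vr n →₀ ℕ}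
    (hs : s ∈ f.support) {w : Vr n} (hw : s w ≠ 0) : s = Finsupp.single w 1 :=
  Finsupp.eq_single_of_degree_le_one ((le_totalDegree hs).trans hf) hw

theorem IsLinearPoly.cf_ne_zero (hf : IsLinearPoly f) {w : Vr n} (hw : w ∈ f.vars) :
    cf f w.1 w.2 ≠ 0 := by
  obtain ⟨s, hs, hws⟩ := (mem_vars_iff_mem_support _).mp hw
  rwa [cf, ← hf.eq_single_of_mem_support hs (Finsupp.mem_support_iff.mp hws), ← mem_support_iff]

theorem isLinearPoly_iff : IsLinearPoly f ↔ f ∈ restrictTotalDegree (Vr n) K 1 :=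
  (mem_restrictTotalDegree _ _ f).symm

theorem IsLinearPoly.add (hf : IsLinearPoly f) (hg : IsLinearPoly g) : IsLinearPoly (f + g) :=
  isLinearPoly_iff.mpr (add_mem (isLinearPoly_iff.mp hf) (isLinearPoly_iff.mp hg))

theorem IsLinearPoly.sub (hf : IsLinearPoly f) (hg : IsLinearPoly g) : IsLinearPoly (f - g) :=
  isLinearPoly_iff.mpr (sub_mem (isLinearPoly_iff.mp hf) (isLinearPoly_iff.mp hg))

theorem IsLinearPoly.smul (c : K) (hf : IsLinearPoly f) : IsLinearPoly (c • f) :=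
  isLinearPoly_iff.mpr (Submodule.smul_mem _ c (isLinearPoly_iff.mp hf))

theorem IsLinearPoly.sum {ι : Type*} (s : Finset ι) {F : ι → R K n}
    (hF : ∀ i ∈ s, IsLinearPoly (F i)) : IsLinearPoly (∑ i ∈ s, F i) :=
  isLinearPoly_iff.mpr (Submodule.sum_mem _ fun i hi => isLinearPoly_iff.mp (hF i hi))

theorem isLinearPoly_zero : IsLinearPoly (0 : R K n) := by
  simp [IsLinearPoly]

theorem isLinearPoly_C (c : K) : IsLinearPoly (C c : R K n) :=
  (totalDegree_C c).le.trans zero_le_one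

theorem isLinearPoly_X (w : Vr n) : IsLinearPoly (X w : R K n) :=
  (totalDegree_X w).le

theorem xOnly_iff : xOnly f ↔ f ∈ supported K {w : Vr n | w.1.isLeft} := by
  rw [mem_supported]
  rfl

theorem xOnly_zero : xOnly (0 : R K n) := fun w hw => by simp at hw

theorem xOnly_iff_of_isLinearPoly (hf : IsLinearPoly f) :
    xOnly f ↔ ∀ j m, cf f (Sum.inr j) m = 0 := by
  refine ⟨cf_inr_eq_zero_of_xOnly, fun h w hw => ?_⟩
  obtain ⟨i | j, m⟩ := w
  · rfl
  · exact absurd (h j m) (hf.cf_ne_zero hw)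

theorem not_xOnly_sub (hf : ¬ xOnly f) (hg : xOnly g) : ¬ xOnly (f - g) := by
  classical
  intro hfg
  refine hf fun w hw => ?_
  have hw' : w ∈ (f - g + g).vars := by rwa [sub_add_cancel]
  rcases Finset.mem_union.mp (vars_add_subset _ _ hw') with h | h
  · exact hfg w h
  · exact hg w h

theorem xOnly_add (hf : xOnly f) (hg : xOnly g) : xOnly (f + g) :=
  xOnly_iff.mpr (add_mem (xOnly_iff.mp hf) (xOnly_iff.mp hg))

theorem xOnly_smul (c : K) (hf : xOnly f) : xOnly (c • f) :=
  xOnly_iff.mpr (Subalgebra.smul_mem _ (xOnly_iff.mp hf) c)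

theorem vars_nonempty_of_not_xOnly (hf : ¬ xOnly f) : f.vars.Nonempty := by
  rw [Finset.nonempty_iff_ne_empty]
  rintro h
  exact hf fun w hw => by simp [h] at hw

end Coefficients

namespace Sys

variable (S : Sys K n)

theorem iterate_D_X_s9 (v : Fin n ⊕ Fin (n - 1)) (m k : ℕ) :
    (⇑S.D)^[k] (X (v, m) : R K n) = X (v, m + k) := by
  induction k with
  | zero => rfl
  | succ k ih => rw [Function.iterate_succ_apply', ih, S.hD_X, Nat.add_assoc]

theorem D_smul (c : K) (f : R K n) : S.D (c • f) = S.der c • f + c • S.D f := by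
  simp only [smul_eq_C_mul, Derivation.leibniz, smul_eq_mul, S.hD_C]
  ring

theorem D_mul_X (p : R K n) (w : Vr n) :
    S.D (p * X w) = p * X (w.1, w.2 + 1) + X w * S.D p := by
  rw [Derivation.leibniz, smul_eq_mul, smul_eq_mul, S.hD_X]

theorem constantCoeff_D (f : R K n) : constantCoeff (S.D f) = S.der (constantCoeff f) := by
  induction f using MvPolynomial.induction_on with
  | C c => rw [S.hD_C, constantCoeff_C, constantCoeff_C]
  | add p q hp hq => rw [map_add, map_add, hp, hq, map_add, map_add]
  | mul_X p w _ => rw [D_mul_X]; simp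

theorem cf_mul_X (p : R K n) (w : Vr n) (v : Fin n ⊕ Fin (n - 1)) (k : ℕ) :
    cf (p * X w) v k = if w = (v, k) then constantCoeff p else 0 := by
  classical
  simp only [cf, coeff_mul_X', Finsupp.support_single _ one_ne_zero, Finset.mem_singleton]
  split_ifs <;> simp_all [constantCoeff_eq]

theorem cf_D_zero (f : R K n) (v : Fin n ⊕ Fin (n - 1)) :
    cf (S.D f) v 0 = S.der (cf f v 0) := by
  induction f using MvPolynomial.induction_on with
  | C c => simp [S.hD_C]
  | add p q hp hq => rw [map_add, cf_add, cf_add, hp, hq, map_add]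
  | mul_X p w _ =>
    rw [D_mul_X, cf_add, mul_comm (X w), cf_mul_X, cf_mul_X, cf_mul_X, constantCoeff_D]
    split_ifs <;> simp_all [Prod.ext_iff]

theorem cf_D_succ (f : R K n) (v : Fin n ⊕ Fin (n - 1)) (m : ℕ) :
    cf (S.D f) v (m + 1) = S.der (cf f v (m + 1)) + cf f v m := by
  induction f using MvPolynomial.induction_on with
  | C c => simp [S.hD_C]
  | add p q hp hq => rw [map_add, cf_add, cf_add, hp, hq, map_add, cf_add]; ring
  | mul_X p w _ =>
    rw [D_mul_X, cf_add, mul_comm (X w), cf_mul_X, cf_mul_X, cf_mul_X, cf_mul_X, constantCoeff_D]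
    split_ifs <;> simp_all [Prod.ext_iff]

end Sys

theorem IsLinearPoly.D (S : Sys K n) {f : R K n} (hf : IsLinearPoly f) : IsLinearPoly (S.D f) := by
  rw [f.as_sum, map_sum]
  refine isLinearPoly_iff.mpr (Submodule.sum_mem _ fun s hs => isLinearPoly_iff.mp ?_)
  rcases s.support.eq_empty_or_nonempty with hs0 | ⟨w, hw⟩
  · rw [Finsupp.support_eq_empty.mp hs0, monomial_zero', S.hD_C]
    exact isLinearPoly_C _
  · rw [hf.eq_single_of_mem_support hs (Finsupp.mem_support_iff.mp hw), ← C_mul_X_eq_monomial,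
      S.D_mul_X, S.hD_C]
    refine (totalDegree_add _ _).trans (max_le ?_ ?_) <;>
      refine (totalDegree_mul _ _).trans ?_ <;> simp

theorem IsLinearPoly.iterate_D (S : Sys K n) {f : R K n} (hf : IsLinearPoly f) (k : ℕ) :
    IsLinearPoly ((⇑S.D)^[k] f) := by
  induction k with
  | zero => exact hf
  | succ k ih => rw [Function.iterate_succ_apply']; exact ih.D S

section Vanishing

variable {f g : R K n} {v : Fin n ⊕ Fin (n - 1)} {b b' : ℤ}

def VanishesAbove (f : R K n) (v : Fin n ⊕ Fin (n - 1)) (b : ℤ) : Prop :=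
  ∀ m : ℕ, b < m → cf f v m = 0

noncomputable def coeffAt (f : R K n) (v : Fin n ⊕ Fin (n - 1)) (b : ℤ) : K :=
  if 0 ≤ b then cf f v b.toNat else 0

theorem VanishesAbove.mono (h : VanishesAbove f v b) (hb : b ≤ b') : VanishesAbove f v b' :=
  fun m hm => h m (hb.trans_lt hm)

theorem VanishesAbove.of_neg (h : VanishesAbove f v b) (hb : b < 0) (b' : ℤ) :
    VanishesAbove f v b' :=
  fun m _ => h m (hb.trans_le (Int.natCast_nonneg m))

theorem VanishesAbove.sub (hf : VanishesAbove f v b) (hg : VanishesAbove g v b) :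
    VanishesAbove (f - g) v b :=
  fun m hm => by rw [cf_sub, hf m hm, hg m hm, sub_zero]

theorem VanishesAbove.smul (c : K) (hf : VanishesAbove f v b) : VanishesAbove (c • f) v b :=
  fun m hm => by rw [cf_smul, hf m hm, mul_zero]

theorem VanishesAbove.coeffAt_eq_zero (h : VanishesAbove f v b) (hb : b < b') :
    coeffAt f v b' = 0 := by
  unfold coeffAt
  split_ifs
  · exact h _ (by omega)
  · rfl

theorem VanishesAbove.pred (h : VanishesAbove f v b) (h0 : coeffAt f v b = 0) :
    VanishesAbove f v (b - 1) := by
  intro m hm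
  rcases (show b < m ∨ b = m by omega) with hlt | rfl
  · exact h m hlt
  · simpa [coeffAt] using h0

theorem coeffAt_sub (f g : R K n) (v : Fin n ⊕ Fin (n - 1)) (b : ℤ) :
    coeffAt (f - g) v b = coeffAt f v b - coeffAt g v b := by
  unfold coeffAt; split_ifs <;> simp

theorem coeffAt_smul (c : K) (f : R K n) (v : Fin n ⊕ Fin (n - 1)) (b : ℤ) :
    coeffAt (c • f) v b = c * coeffAt f v b := by
  unfold coeffAt; split_ifs <;> simp

theorem le_ordTot_of_mem_vars {w : Vr n} (h : w ∈ f.vars) : w.2 ≤ ordTot f :=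
  WithBot.le_unbotD (Finset.le_max (Finset.mem_image_of_mem _ h))

theorem vanishesAbove_ordTot (f : R K n) (v : Fin n ⊕ Fin (n - 1)) :
    VanishesAbove f v (ordTot f) := by
  intro m hm
  by_contra h
  have := le_ordTot_of_mem_vars (mem_vars_of_cf_ne_zero h)
  omega

theorem vanishesAbove_ordIn (f : R K n) (v : Fin n ⊕ Fin (n - 1)) :
    VanishesAbove f v (ordIn f v) := by
  classical
  intro m hm
  by_contra h
  have hmem : (m : ℤ) ∈ (f.vars.filter (fun w => w.1 = v)).image (fun w => (w.2 : ℤ)) :=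
    Finset.mem_image.mpr ⟨(v, m), Finset.mem_filter.mpr ⟨mem_vars_of_cf_ne_zero h, rfl⟩, rfl⟩
  exact absurd hm (not_lt.mpr (WithBot.le_unbotD (Finset.le_max hmem)))

theorem ordIn_le_ordTot (f : R K n) (v : Fin n ⊕ Fin (n - 1)) : ordIn f v ≤ ordTot f := by
  unfold ordIn
  rw [WithBot.unbotD_le_iff (fun _ => by omega)]
  refine Finset.max_le fun b hb => ?_
  obtain ⟨w, hw, rfl⟩ := Finset.mem_image.mp hb
  exact WithBot.coe_le_coe.mpr (by exact_mod_cast le_ordTot_of_mem_vars (Finset.mem_filter.mp hw).1)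

theorem coeffAt_sum {ι : Type*} (s : Finset ι) (f : ι → R K n) (v : Fin n ⊕ Fin (n - 1))
    (b : ℤ) : coeffAt (∑ i ∈ s, f i) v b = ∑ i ∈ s, coeffAt (f i) v b := by
  unfold coeffAt; split_ifs <;> simp [cf_sum]

theorem coeffAt_inr_eq_zero_of_xOnly (hf : xOnly f) (j : Fin (n - 1)) (b : ℤ) :
    coeffAt f (Sum.inr j) b = 0 := by
  unfold coeffAt; split_ifs <;> simp [cf_inr_eq_zero_of_xOnly hf]

variable (S : Sys K n)

theorem VanishesAbove.D (h : VanishesAbove f v b) : VanishesAbove (S.D f) v (b + 1) := by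
  rintro (_ | m) hm
  · rw [S.cf_D_zero, h 0 (by omega), map_zero]
  · rw [S.cf_D_succ, h _ (by omega), h _ (by omega), map_zero, add_zero]

theorem VanishesAbove.iterate_D (h : VanishesAbove f v b) (k : ℕ) :
    VanishesAbove ((⇑S.D)^[k] f) v (b + k) := by
  induction k with
  | zero => simpa using h
  | succ k ih =>
    rw [Function.iterate_succ_apply']
    exact (ih.D S).mono (by omega)

theorem VanishesAbove.of_D (h : VanishesAbove (S.D f) v (b + 1)) : VanishesAbove f v b := by
  suffices ∀ d m : ℕ, b < m → ordTot f < m + d → cf f v m = 0 from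
    fun m hm => this (ordTot f + 1) m hm (by omega)
  intro d
  induction d with
  | zero => exact fun m _ hm => vanishesAbove_ordTot f v m (by omega)
  | succ d ih =>
    intro m hm hd
    have h1 := h (m + 1) (by omega)
    rwa [S.cf_D_succ, ih (m + 1) (by omega) (by omega), map_zero, zero_add] at h1

theorem VanishesAbove.of_iterate_D (k : ℕ) (h : VanishesAbove ((⇑S.D)^[k] f) v (b + k)) :
    VanishesAbove f v b := by
  induction k generalizing b with
  | zero => simpa using h
  | succ k ih =>
    rw [Function.iterate_succ_apply'] at h
    exact ih (VanishesAbove.of_D S (by rwa [show b + k + 1 = b + ↑(k + 1) by push_cast; ring]))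

theorem cf_iterate_D_eq_zero (h : ∀ m, cf f v m = 0) (k m : ℕ) :
    cf ((⇑S.D)^[k] f) v m = 0 := by
  have hv : VanishesAbove f v (-1) := fun m _ => h m
  exact (hv.of_neg (by norm_num) (-1 - k)).iterate_D S k m (by omega)

theorem cf_iterate_D_add {M : ℕ} (h : VanishesAbove f v M) (k : ℕ) :
    cf ((⇑S.D)^[k] f) v (M + k) = cf f v M := by
  induction k with
  | zero => rfl
  | succ k ih =>
    rw [Function.iterate_succ_apply', ← add_assoc, S.cf_D_succ, ih,
      h.iterate_D S k _ (by push_cast; omega), map_zero, zero_add]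

theorem coeffAt_iterate_D (h : VanishesAbove f v b) (k : ℕ) :
    coeffAt ((⇑S.D)^[k] f) v (b + k) = coeffAt f v b := by
  rcases lt_or_ge b 0 with hb | hb
  · rw [((h.of_neg hb (b - 1)).iterate_D S k).coeffAt_eq_zero (by omega), coeffAt, if_neg hb.not_ge]
  · lift b to ℕ using hb
    simp only [coeffAt, if_pos (by positivity : (0 : ℤ) ≤ b + k), if_pos (Int.natCast_nonneg b)]
    exact_mod_cast cf_iterate_D_add S h k

end Vanishing

namespace Sys

variable (S : Sys K n) {f g A B P : R K n} {c : ℕ}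

/-- The level `N - oᵢ - γ` computed in `ℤ`. `PSset` truncates it in `ℕ`, so it may be negative
while `Fᵢ` itself still lies in `PS`. -/
noncomputable def xLevel (i : Fin n) : ℤ := (S.Nn : ℤ) - S.o i - S.gamT

noncomputable def uLevel (j : Fin (n - 1)) : ℤ := (S.Nn : ℤ) - S.gam j - S.gamT

theorem o_le_Nn (i : Fin n) : S.o i ≤ S.Nn :=
  Finset.single_le_sum (fun _ _ => Nat.zero_le _) (Finset.mem_univ i)

theorem gam_add_ordIn_le (i : Fin n) (j : Fin (n - 1)) :
    (S.gam j : ℤ) + ordIn (S.F i) (Sum.inr j) ≤ S.o i := by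
  have h1 : S.gamZ j ≤ S.o i - ordIn (S.F i) (Sum.inr j) := Finset.inf'_le _ (Finset.mem_univ i)
  have h2 := ordIn_le_ordTot (S.F i) (Sum.inr j)
  have h3 : S.o i = ordTot (S.F i) := rfl
  simp only [gam]
  omega

theorem isLinearPoly_H (i : Fin n) : IsLinearPoly (S.H i) := by
  rcases eq_or_ne (S.H i) 0 with h | h
  · rw [h]; exact isLinearPoly_zero
  · exact ((S.H_hom i).totalDegree h).le

theorem isLinearPoly_F (i : Fin n) : IsLinearPoly (S.F i) :=
  ((isLinearPoly_X _).sub (isLinearPoly_C _)).add (S.isLinearPoly_H i)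

theorem vanishesAbove_F_inr (i : Fin n) (j : Fin (n - 1)) :
    VanishesAbove (S.F i) (Sum.inr j) ((S.o i : ℤ) - S.gam j) :=
  (vanishesAbove_ordIn _ _).mono (by linarith [S.gam_add_ordIn_le i j])

theorem Smat_apply_rev (i : Fin n) (j : Fin (n - 1)) :
    S.Smat i j.rev = coeffAt (S.F i) (Sum.inr j) ((S.o i : ℤ) - S.gam j) := by
  simp only [Smat, Matrix.of_apply, Fin.rev_rev, coeffAt]
  split_ifs with h1 h2 h2
  · congr; omega
  · omega
  · omega
  · rfl

theorem iterate_D_F (i : Fin n) (k : ℕ) :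
    (⇑S.D)^[k] (S.F i) = X (Sum.inl i, k) + (⇑S.D)^[k] (S.H i - C (S.a i)) := by
  rw [show S.F i = X (Sum.inl i, 0) + (S.H i - C (S.a i)) by rw [F]; ring, iterate_map_add,
    iterate_D_X_s9, zero_add]

theorem cf_iterate_D_H_sub_C_inl (i i' : Fin n) (k m : ℕ) :
    cf ((⇑S.D)^[k] (S.H i - C (S.a i))) (Sum.inl i') m = 0 :=
  cf_iterate_D_eq_zero S (fun m => by
    rw [cf_sub, cf_C_s9, cf_inl_eq_zero_of_uOnly (S.H_u i), sub_zero]) k m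

theorem cf_iterate_D_F_inl (i' : Fin n) (k' : ℕ) (i : Fin n) (k : ℕ) :
    cf ((⇑S.D)^[k'] (S.F i')) (Sum.inl i) k = if i' = i ∧ k' = k then 1 else 0 := by
  classical
  rw [iterate_D_F, cf_add, cf_iterate_D_H_sub_C_inl, add_zero, cf, coeff_X]
  simp [Finsupp.single_eq_single_iff, Prod.ext_iff, eq_comm]

/-- Substitutes `x_{i,k} ↦ ∂ᵏ Pᵢ` only for `k ≤ N - oᵢ - γ`: it kills `PS` and fixes every
higher `x_{i,k}`. -/
noncomputable def truncSubst : R K n →ₐ[K] R K n :=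
  aeval fun w => Sum.elim
    (fun i => if w.2 ≤ S.Nn - S.o i - S.gamT then (⇑S.D)^[w.2] (C (S.a i) - S.H i) else X w)
    (fun _ => X w) w.1

theorem truncSubst_eq_self (hf : IsLinearPoly f)
    (hlow : ∀ i k, k ≤ S.Nn - S.o i - S.gamT → cf f (Sum.inl i) k = 0) :
    S.truncSubst f = f := by
  refine (eval₂Hom_congr' rfl (fun w hw _ => ?_) rfl).trans (aeval_X_left_apply f)
  obtain ⟨i | j, k⟩ := w
  · exact if_neg fun hk => hf.cf_ne_zero hw (hlow i k hk)
  · rfl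

theorem truncSubst_iterate_D_F (i : Fin n) (k : ℕ) (hk : k ≤ S.Nn - S.o i - S.gamT) :
    S.truncSubst ((⇑S.D)^[k] (S.F i)) = 0 := by
  have hfix : S.truncSubst ((⇑S.D)^[k] (S.H i - C (S.a i))) = (⇑S.D)^[k] (S.H i - C (S.a i)) :=
    S.truncSubst_eq_self (((S.isLinearPoly_H i).sub (isLinearPoly_C _)).iterate_D S k)
      fun i' m _ => S.cf_iterate_D_H_sub_C_inl i i' k m
  rw [iterate_D_F, map_add, hfix, truncSubst, aeval_X]
  simp only [Sum.elim_inl, if_pos hk]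
  rw [← iterate_map_add, show C (S.a i) - S.H i + (S.H i - C (S.a i)) = 0 by ring,
    iterate_map_zero]

theorem cf_sum_smul_iterate_D_F (c : Fin n → ℕ → K) (i : Fin n) (k : ℕ) :
    cf (∑ i', ∑ k' ∈ Finset.range (S.Nn - S.o i' - S.gamT + 1),
        c i' k' • (⇑S.D)^[k'] (S.F i')) (Sum.inl i) k
      = if k ≤ S.Nn - S.o i - S.gamT then c i k else 0 := by
  simp only [cf_sum, cf_smul, cf_iterate_D_F_inl, mul_ite, mul_one, mul_zero, ite_and]
  simp [Finset.sum_ite_eq']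

theorem truncSubst_eq_zero_of_mem_span (hP : P ∈ Ideal.span S.PSset) : S.truncSubst P = 0 := by
  have hle : Ideal.span S.PSset ≤ RingHom.ker S.truncSubst :=
    Ideal.span_le.mpr fun _ ⟨i, k, hk, hg⟩ => hg ▸ S.truncSubst_iterate_D_F i k hk
  exact hle hP

theorem eq_sum_of_mem_span (hP : P ∈ Ideal.span S.PSset) (hlin : IsLinearPoly P) :
    P = ∑ i, ∑ k ∈ Finset.range (S.Nn - S.o i - S.gamT + 1),
      cf P (Sum.inl i) k • (⇑S.D)^[k] (S.F i) := by
  set Q := P - ∑ i, ∑ k ∈ Finset.range (S.Nn - S.o i - S.gamT + 1),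
      cf P (Sum.inl i) k • (⇑S.D)^[k] (S.F i)
  have hQlin : IsLinearPoly Q := hlin.sub <| IsLinearPoly.sum _ fun i _ =>
    IsLinearPoly.sum _ fun k _ => (((S.isLinearPoly_F i).iterate_D S k).smul _)
  have hfix : S.truncSubst Q = Q := S.truncSubst_eq_self hQlin fun i k hk => by
    rw [cf_sub, cf_sum_smul_iterate_D_F, if_pos hk, sub_self]
  have hkill : S.truncSubst Q = 0 := by
    simp only [Q, map_sub, map_sum, map_smul, S.truncSubst_eq_zero_of_mem_span hP]
    rw [zero_sub, neg_eq_zero]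
    refine Finset.sum_eq_zero fun i _ => Finset.sum_eq_zero fun k hk => ?_
    rw [S.truncSubst_iterate_D_F i k (Nat.lt_succ_iff.mp (Finset.mem_range.mp hk)), smul_zero]
  exact sub_eq_zero.mp (hfix.symm.trans hkill)

theorem vanishesAbove_inl_of_mem_span (hP : P ∈ Ideal.span S.PSset) (hlin : IsLinearPoly P)
    (i : Fin n) : VanishesAbove P (Sum.inl i) (S.Nn - S.o i - S.gamT : ℕ) := fun k hk => by
  rw [S.eq_sum_of_mem_span hP hlin, cf_sum_smul_iterate_D_F, if_neg (by omega)]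

/-- The generators of `PS` that stay in `PS` after `t` further derivations. -/
def depthGens (t : ℕ) : Set (R K n) :=
  {g | ∃ i k, k + t ≤ S.Nn - S.o i - S.gamT ∧ g = (⇑S.D)^[k] (S.F i)}

def HasXDepth (t : ℤ) (f : R K n) : Prop :=
  ∀ i, VanishesAbove f (Sum.inl i) (S.xLevel i - t)

noncomputable def topXCoeffs (t : ℤ) (f : R K n) : Fin n → K :=
  fun i => coeffAt f (Sum.inl i) (S.xLevel i - t)

theorem span_depthGens_le (t : ℕ) :
    Submodule.span K (S.depthGens t) ≤ (Ideal.span S.PSset).restrictScalars K :=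
  Submodule.span_le.mpr fun _ ⟨i, k, hk, hg⟩ => Ideal.subset_span ⟨i, k, by omega, hg⟩

theorem D_mem_span_depthGens {t : ℕ} (hf : f ∈ Submodule.span K (S.depthGens (t + 1))) :
    S.D f ∈ Submodule.span K (S.depthGens t) := by
  have hmono : S.depthGens (t + 1) ⊆ S.depthGens t :=
    fun _ ⟨i, k, hk, hg⟩ => ⟨i, k, by omega, hg⟩
  induction hf using Submodule.span_induction with
  | mem g hg =>
    obtain ⟨i, k, hk, rfl⟩ := hg
    rw [← Function.iterate_succ_apply' (⇑S.D) k (S.F i)]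
    exact Submodule.subset_span ⟨i, k + 1, by omega, rfl⟩
  | zero => rw [map_zero]; exact Submodule.zero_mem _
  | add x y _ _ hx hy => rw [map_add]; exact Submodule.add_mem _ hx hy
  | smul c x hx ihx =>
    rw [D_smul]
    exact Submodule.add_mem _ (Submodule.smul_mem _ _ (Submodule.span_mono hmono hx))
      (Submodule.smul_mem _ _ ihx)

theorem iterate_D_mem_span_depthGens {t c : ℕ}
    (hf : f ∈ Submodule.span K (S.depthGens (t + c))) :
    (⇑S.D)^[c] f ∈ Submodule.span K (S.depthGens t) := by
  induction c generalizing f with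
  | zero => exact hf
  | succ c ih =>
    rw [Function.iterate_succ_apply]
    exact ih (S.D_mem_span_depthGens (by rwa [← add_assoc] at hf))

theorem mem_span_depthGens {t : ℕ} (hP : P ∈ Ideal.span S.PSset) (hlin : IsLinearPoly P)
    (hd : S.HasXDepth t P) : P ∈ Submodule.span K (S.depthGens t) := by
  rw [S.eq_sum_of_mem_span hP hlin]
  refine Submodule.sum_mem _ fun i _ => Submodule.sum_mem _ fun k _ => ?_
  by_cases hk : k + t ≤ S.Nn - S.o i - S.gamT
  · exact Submodule.smul_mem _ _ (Submodule.subset_span ⟨i, k, hk, rfl⟩)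
  · rw [hd i k (by simp only [xLevel]; omega), zero_smul]
    exact Submodule.zero_mem _

theorem HasXDepth.mono {t t' : ℤ} (h : S.HasXDepth t f) (ht : t' ≤ t) : S.HasXDepth t' f :=
  fun i => (h i).mono (by omega)

theorem HasXDepth.sub {t : ℤ} (hf : S.HasXDepth t f) (hg : S.HasXDepth t g) :
    S.HasXDepth t (f - g) :=
  fun i => (hf i).sub (hg i)

theorem HasXDepth.smul {t : ℤ} (c : K) (hf : S.HasXDepth t f) : S.HasXDepth t (c • f) :=
  fun i => (hf i).smul c

theorem HasXDepth.succ {t : ℤ} (h : S.HasXDepth t f) (h0 : S.topXCoeffs t f = 0) :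
    S.HasXDepth (t + 1) f :=
  fun i => by simpa [sub_add_eq_sub_sub] using (h i).pred (congrFun h0 i)

theorem HasXDepth.iterate_D {t : ℤ} (h : S.HasXDepth t f) (k : ℕ) :
    S.HasXDepth (t - k) ((⇑S.D)^[k] f) :=
  fun i => by simpa [sub_sub_eq_add_sub, add_sub_right_comm] using (h i).iterate_D S k

theorem topXCoeffs_iterate_D {t : ℤ} (h : S.HasXDepth t f) (k : ℕ) :
    S.topXCoeffs (t - k) ((⇑S.D)^[k] f) = S.topXCoeffs t f :=
  funext fun i => by
    simpa [topXCoeffs, sub_sub_eq_add_sub, add_sub_right_comm] using coeffAt_iterate_D S (h i) k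

theorem iterate_D_mem_span_PSset {t k : ℕ} (hP : P ∈ Ideal.span S.PSset)
    (hlin : IsLinearPoly P) (hd : S.HasXDepth t P) (hk : k ≤ t) :
    (⇑S.D)^[k] P ∈ Ideal.span S.PSset :=
  S.span_depthGens_le 0 <| S.iterate_D_mem_span_depthGens <|
    S.mem_span_depthGens hP hlin (hd.mono S (by simpa using hk))

theorem inXV_of_vanishesAbove (hlin : IsLinearPoly f)
    (hx : ∀ i, VanishesAbove f (Sum.inl i) (S.Nn - S.o i - S.gamT : ℕ))
    (hu : ∀ j, VanishesAbove f (Sum.inr j) (S.Nn - S.gam j - S.gamT : ℕ)) : S.inXV f := by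
  rintro ⟨i | j, m⟩ hw
  · by_contra h
    exact hlin.cf_ne_zero hw (hx i m (by simp at h; omega))
  · by_contra h
    exact hlin.cf_ne_zero hw (hu j m (by simp at h; omega))

theorem psIdealMem_iterate_D {t : ℕ} (hP : P ∈ Ideal.span S.PSset) (hlin : IsLinearPoly P)
    (hx : S.HasXDepth t P) (hu : ∀ j, VanishesAbove P (Sum.inr j) (S.uLevel j - t)) :
    S.PSIdealMem ((⇑S.D)^[t] P) := by
  refine ⟨S.iterate_D_mem_span_PSset hP hlin hx le_rfl, S.inXV_of_vanishesAbove
    (hlin.iterate_D S t) (fun i => ?_) (fun j => ?_)⟩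
  · simpa using ((hx.iterate_D S t) i).mono (by simp only [xLevel]; omega)
  · exact ((hu j).iterate_D S t).mono (by simp only [uLevel]; omega)

theorem hasXDepth_of_iterate_D_mem_span (hc : 1 ≤ c) (hlin : IsLinearPoly P)
    (h : (⇑S.D)^[c] P ∈ Ideal.span S.PSset) : S.HasXDepth c P := by
  intro i
  have hv : VanishesAbove P (Sum.inl i) ((S.Nn - S.o i - S.gamT : ℕ) - c) :=
    VanishesAbove.of_iterate_D S c (by
      simpa using S.vanishesAbove_inl_of_mem_span h (hlin.iterate_D S c) i)
  rcases le_or_gt 0 (S.xLevel i) with h0 | h0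
  · exact hv.mono (by simp only [xLevel] at h0 ⊢; omega)
  · exact hv.of_neg (by simp only [xLevel] at h0; omega) _

theorem coeffAt_inr_iterate_D_F {s : ℤ} (i : Fin n) (j : Fin (n - 1)) {k : ℕ}
    (hk : (k : ℤ) ≤ S.xLevel i - s) :
    coeffAt ((⇑S.D)^[k] (S.F i)) (Sum.inr j) (S.uLevel j - s)
      = if (k : ℤ) = S.xLevel i - s then S.Smat i j.rev else 0 := by
  have hlev : S.uLevel j - s = ((S.o i : ℤ) - S.gam j) + (S.xLevel i - s) := by
    simp only [uLevel, xLevel]; ring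
  split_ifs with h
  · rw [hlev, ← h, coeffAt_iterate_D S (S.vanishesAbove_F_inr i j), Smat_apply_rev]
  · exact ((S.vanishesAbove_F_inr i j).iterate_D S k).coeffAt_eq_zero (by omega)

theorem sum_cf_mul_coeffAt_iterate_D_F (hP : P ∈ Ideal.span S.PSset) (hlin : IsLinearPoly P)
    {s : ℤ} (hd : S.HasXDepth s P) (i : Fin n) (j : Fin (n - 1)) :
    ∑ k ∈ Finset.range (S.Nn - S.o i - S.gamT + 1),
        cf P (Sum.inl i) k * coeffAt ((⇑S.D)^[k] (S.F i)) (Sum.inr j) (S.uLevel j - s)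
      = S.topXCoeffs s P i * S.Smat i j.rev := by
  set k₀ := (S.xLevel i - s).toNat
  have hlow := S.vanishesAbove_inl_of_mem_span hP hlin i
  rw [Finset.sum_eq_single k₀]
  · rcases le_or_gt 0 (S.xLevel i - s) with h0 | h0
    · rw [S.coeffAt_inr_iterate_D_F i j (by omega), if_pos (by omega), topXCoeffs, coeffAt,
        if_pos h0]
    · rw [hd i k₀ (by omega), zero_mul, topXCoeffs, coeffAt, if_neg (by omega), zero_mul]
  · intro k _ hk
    rcases le_or_gt (k : ℤ) (S.xLevel i - s) with h0 | h0
    · rw [S.coeffAt_inr_iterate_D_F i j h0, if_neg (by omega), mul_zero]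
    · rw [hd i k h0, zero_mul]
  · intro hk₀
    rw [hlow k₀ (by simp at hk₀; omega), zero_mul]

theorem coeffAt_inr_eq_sum (hP : P ∈ Ideal.span S.PSset) (hlin : IsLinearPoly P) {s : ℤ}
    (hd : S.HasXDepth s P) (j : Fin (n - 1)) :
    coeffAt P (Sum.inr j) (S.uLevel j - s) = ∑ i, S.topXCoeffs s P i * S.Smat i j.rev := by
  conv_lhs => rw [S.eq_sum_of_mem_span hP hlin]
  simp only [coeffAt_sum, coeffAt_smul]
  exact Finset.sum_congr rfl fun i _ => S.sum_cf_mul_coeffAt_iterate_D_F hP hlin hd i j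

open scoped Matrix in
theorem topXCoeffs_vecMul_Smat (hP : P ∈ Ideal.span S.PSset) (hlin : IsLinearPoly P) {s : ℤ}
    (hd : S.HasXDepth s P) (hu : ∀ j, coeffAt P (Sum.inr j) (S.uLevel j - s) = 0) :
    S.topXCoeffs s P ᵥ* S.Smat = 0 := by
  funext j
  rw [← Fin.rev_rev j, Pi.zero_apply, ← hu j.rev, S.coeffAt_inr_eq_sum hP hlin hd]
  rfl

theorem xOnly_iterate_D (hlin : IsLinearPoly f) (hx : xOnly f) (k : ℕ) :
    xOnly ((⇑S.D)^[k] f) :=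
  (xOnly_iff_of_isLinearPoly (hlin.iterate_D S k)).mpr fun j =>
    cf_iterate_D_eq_zero S (cf_inr_eq_zero_of_xOnly hx j) k

theorem coOrd_bddAbove (hlin : IsLinearPoly f) (hne : f.vars.Nonempty) :
    BddAbove {c : ℕ | S.PSIdealMem ((⇑S.D)^[c] f)} := by
  obtain ⟨w, hw, hmax⟩ := f.vars.exists_max_image Prod.snd hne
  have hv : VanishesAbove f w.1 w.2 := fun m hm => by
    by_contra h
    have := hmax _ (mem_vars_of_cf_ne_zero h)
    omega
  refine ⟨S.Nn, fun c hc => ?_⟩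
  have hcf : cf ((⇑S.D)^[c] f) w.1 (w.2 + c) ≠ 0 := by
    rw [cf_iterate_D_add S hv c]
    exact hlin.cf_ne_zero hw
  have hin := hc.2 _ (mem_vars_of_cf_ne_zero hcf)
  rcases w with ⟨i | j, m⟩ <;> simp at hin <;> omega

theorem le_coOrd (hlin : IsLinearPoly f) (hne : f.vars.Nonempty)
    (h : S.PSIdealMem ((⇑S.D)^[c] f)) : c ≤ S.coOrd f :=
  le_csSup (S.coOrd_bddAbove hlin hne) h

theorem psIdealMem_iterate_coOrd (hlin : IsLinearPoly f) (hne : f.vars.Nonempty)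
    (h : S.PSIdealMem f) : S.PSIdealMem ((⇑S.D)^[S.coOrd f] f) :=
  Nat.sSup_mem ⟨0, h⟩ (S.coOrd_bddAbove hlin hne)

theorem psIdealMem_of_xOnly (hP : P ∈ Ideal.span S.PSset) (hlin : IsLinearPoly P)
    (hx : xOnly P) : S.PSIdealMem P :=
  ⟨hP, S.inXV_of_vanishesAbove hlin (S.vanishesAbove_inl_of_mem_span hP hlin)
    fun j m _ => cf_inr_eq_zero_of_xOnly hx j m⟩

theorem vars_nonempty_of_IDPrimitive (h : S.IDPrimitive A) : A.vars.Nonempty := by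
  rw [Finset.nonempty_iff_ne_empty]
  intro hA
  -- a constant `A` has all `𝓕ᵢ = 0`, which `∂` divides on the left
  have hop : ∀ i, S.opOf A i = 0 := fun i => Finset.sum_eq_zero fun k _ => by
    rw [show cf A (Sum.inl i) k = 0 by
      by_contra hk; simpa [hA] using mem_vars_of_cf_ne_zero hk, Polynomial.monomial_zero_right]
  simpa using h Polynomial.X fun i => ⟨0, fun f => by simp [hop, applyOp]⟩

structure IsPivot (A : R K n) (c : ℕ) : Prop where
  mem_span : A ∈ Ideal.span S.PSset
  isLinearPoly : IsLinearPoly A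
  xOnly : xOnly A
  hasXDepth : S.HasXDepth c A
  topXCoeffs_ne_zero : S.topXCoeffs c A ≠ 0

theorem isPivot_coOrd (hlin : IsLinearPoly A) (hx : xOnly A) (hA : S.PSIdealMem A)
    (hne : A.vars.Nonempty) (hc : 1 ≤ S.coOrd A) : S.IsPivot A (S.coOrd A) where
  mem_span := hA.1
  isLinearPoly := hlin
  xOnly := hx
  hasXDepth :=
    S.hasXDepth_of_iterate_D_mem_span hc hlin (S.psIdealMem_iterate_coOrd hlin hne hA).1
  topXCoeffs_ne_zero h0 := by
    have hdepth := (S.hasXDepth_of_iterate_D_mem_span hc hlin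
      (S.psIdealMem_iterate_coOrd hlin hne hA).1).succ S h0
    have hnext := S.psIdealMem_iterate_D (t := S.coOrd A + 1) hA.1 hlin (by exact_mod_cast hdepth)
      fun j m _ => cf_inr_eq_zero_of_xOnly hx j m
    have := S.le_coOrd hlin hne hnext
    omega

theorem topXCoeffs_sub_smul (t : ℤ) (f g : R K n) (a : K) :
    S.topXCoeffs t (f - a • g) = S.topXCoeffs t f - a • S.topXCoeffs t g :=
  funext fun i => by simp [topXCoeffs, coeffAt_sub, coeffAt_smul]

open scoped Matrix in
theorem IsPivot.vecMul_Smat (hA : S.IsPivot A c) : S.topXCoeffs c A ᵥ* S.Smat = 0 :=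
  S.topXCoeffs_vecMul_Smat hA.mem_span hA.isLinearPoly hA.hasXDepth
    fun j => coeffAt_inr_eq_zero_of_xOnly hA.xOnly j _

/-- The top `x`-coefficients of `P` lie in the left kernel of `S`, hence are `λ` times those of
the pivot, and subtracting `λ ∂^{c-s} A` clears them. -/
theorem exists_hasXDepth_add_one_sub (hrank : S.Smat.rank = n - 1) (hA : S.IsPivot A c)
    (hP : P ∈ Ideal.span S.PSset) (hlin : IsLinearPoly P) {s : ℤ} (hs : s < c)
    (hd : S.HasXDepth s P) (hu : ∀ j, coeffAt P (Sum.inr j) (S.uLevel j - s) = 0) :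
    ∃ Q, Q ∈ Ideal.span S.PSset ∧ IsLinearPoly Q ∧ xOnly Q ∧ S.HasXDepth (s + 1) (P - Q) := by
  obtain ⟨lam, hlam⟩ := Matrix.exists_eq_smul_of_vecMul_eq_zero
    (by rw [hrank, Fintype.card_fin]) hA.topXCoeffs_ne_zero (hA.vecMul_Smat S)
    (S.topXCoeffs_vecMul_Smat hP hlin hd hu)
  rcases lt_or_ge s 0 with hneg | hnonneg
  · -- nothing to subtract: the layer lies above `N - oᵢ - γ` where that is `≥ 0`, and the
    -- pivot's layer is empty where it is `< 0`
    refine ⟨0, zero_mem _, isLinearPoly_zero, xOnly_zero, ?_⟩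
    rw [sub_zero]
    refine hd.succ S (funext fun i => ?_)
    rcases le_or_gt 0 (S.xLevel i) with h0 | h0
    · exact (S.vanishesAbove_inl_of_mem_span hP hlin i).coeffAt_eq_zero
        (by simp only [xLevel] at h0 ⊢; omega)
    · rw [hlam, Pi.smul_apply, topXCoeffs, coeffAt, if_neg (by omega), smul_zero, Pi.zero_apply]
  · obtain ⟨k, hk⟩ : ∃ k : ℕ, (k : ℤ) = c - s := ⟨(c - s).toNat, by omega⟩
    have hdA : S.HasXDepth s ((⇑S.D)^[k] A) := by
      simpa [hk] using hA.hasXDepth.iterate_D S k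
    have htopA : S.topXCoeffs s ((⇑S.D)^[k] A) = S.topXCoeffs c A := by
      simpa [hk] using S.topXCoeffs_iterate_D hA.hasXDepth k
    refine ⟨lam • (⇑S.D)^[k] A, ?_, (hA.isLinearPoly.iterate_D S k).smul lam, ?_, ?_⟩
    · exact Submodule.smul_of_tower_mem _ lam (S.iterate_D_mem_span_PSset hA.mem_span
        hA.isLinearPoly hA.hasXDepth (by omega : k ≤ c))
    · exact xOnly_smul lam (S.xOnly_iterate_D hA.isLinearPoly hA.xOnly k)
    · refine (hd.sub S (hdA.smul S lam)).succ S ?_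
      rw [topXCoeffs_sub_smul, htopA, hlam, sub_self]

theorem exists_hasXDepth_sub (hrank : S.Smat.rank = n - 1) (hA : S.IsPivot A c)
    (hB : B ∈ Ideal.span S.PSset) (hlin : IsLinearPoly B) {e : ℕ} (he : e ≤ c)
    (hu : ∀ j, VanishesAbove B (Sum.inr j) (S.uLevel j - e)) :
    ∃ Bb, Bb ∈ Ideal.span S.PSset ∧ IsLinearPoly Bb ∧ xOnly Bb ∧ S.HasXDepth e (B - Bb) := by
  suffices ∀ s : ℤ, -(S.gamT : ℤ) ≤ s → s ≤ e →
      ∃ Bb, Bb ∈ Ideal.span S.PSset ∧ IsLinearPoly Bb ∧ xOnly Bb ∧ S.HasXDepth s (B - Bb) from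
    this e (by omega) le_rfl
  intro s hs
  induction s, hs using Int.leInduction with
  | base =>
    refine fun _ => ⟨0, zero_mem _, isLinearPoly_zero, xOnly_zero, ?_⟩
    rw [sub_zero]
    exact fun i => (S.vanishesAbove_inl_of_mem_span hB hlin i).mono
      (by have := S.o_le_Nn i; simp only [xLevel]; omega)
  | succ s _ ih =>
    intro hse
    obtain ⟨Bb, hBb, hBblin, hBbx, hd⟩ := ih (by omega)
    have hRu : ∀ j, coeffAt (B - Bb) (Sum.inr j) (S.uLevel j - s) = 0 := fun j => by
      rw [coeffAt_sub, (hu j).coeffAt_eq_zero (by omega), coeffAt_inr_eq_zero_of_xOnly hBbx,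
        sub_zero]
    obtain ⟨Q, hQ, hQlin, hQx, hdQ⟩ := S.exists_hasXDepth_add_one_sub hrank hA
      (sub_mem hB hBb) (hlin.sub hBblin) (by omega) hd hRu
    refine ⟨Bb + Q, add_mem hBb hQ, hBblin.add hQlin, xOnly_add hBbx hQx, ?_⟩
    rwa [← sub_sub]

end Sys

theorem statement_9_general {K : Type} [Field K] {n : ℕ} (S : Sys K n) (G : Finset (R K n))
    (hG : S.IsAssocGB G) (A : R K n) (hAlin : IsLinearPoly A)
    (hAx : xOnly A) (hAPS : S.PSIdealMem A) (hAprim : S.IDPrimitive A)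
    (hrank : S.Smat.rank = n - 1)
    (B : R K n) (hBG : B ∈ G) (hBnx : ¬ xOnly B)
    (e : ℕ) (he1 : 1 ≤ e) (he2 : e ≤ S.coOrd A)
    (hord : ∀ j : Fin (n - 1),
      ordIn B (Sum.inr j) ≤ (S.Nn : ℤ) - S.gam j - S.gamT - e) :
    ∃ Bbar : R K n, S.PSIdealMem Bbar ∧ xOnly Bbar ∧ e ≤ S.coOrd (B - Bbar) := by
  obtain ⟨-, hBlin, -, hBspan⟩ := hG.1 B hBG
  have hBu : ∀ j, VanishesAbove B (Sum.inr j) (S.uLevel j - e) := fun j =>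
    (vanishesAbove_ordIn B (Sum.inr j)).mono (hord j)
  have hA := S.isPivot_coOrd hAlin hAx hAPS (S.vars_nonempty_of_IDPrimitive hAprim)
    (he1.trans he2)
  obtain ⟨Bb, hBb, hBblin, hBbx, hdepth⟩ := S.exists_hasXDepth_sub hrank hA hBspan hBlin he2 hBu
  have hRlin := hBlin.sub hBblin
  have hRu : ∀ j, VanishesAbove (B - Bb) (Sum.inr j) (S.uLevel j - e) := fun j =>
    (hBu j).sub fun m _ => cf_inr_eq_zero_of_xOnly hBbx j m
  refine ⟨Bb, S.psIdealMem_of_xOnly hBb hBblin hBbx, hBbx, S.le_coOrd hRlin ?_ ?_⟩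
  · exact vars_nonempty_of_not_xOnly (not_xOnly_sub hBnx hBbx)
  · exact S.psIdealMem_iterate_D (sub_mem hBspan hBb) hRlin hdepth hRu

/-- Let `A` be a nonzero linear `ID`-primitive differential polynomial
in `(G₀)` with `|G₀| = c(A) + 1` and suppose `rank(S) = n - 1`. Given `B ∈ G \ G₀`,
suppose there is `1 ≤ e_B ≤ c(A)` with `ord(B,uⱼ) ≤ N - γⱼ - γ - e_B` for all `j`.
Then there exists `B̄ ∈ (G₀)` such that `c(B - B̄) ≥ e_B`. -/
theorem statement_9 {K : Type} [Field K] {n : ℕ} (S : Sys K n) (G : Finset (R K n))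
    (hG : S.IsAssocGB G) (A : R K n) (hA0 : A ≠ 0) (hAlin : IsLinearPoly A)
    (hAx : xOnly A) (hAPS : S.PSIdealMem A) (hAprim : S.IDPrimitive A)
    (hcard : (G0 G).card = S.coOrd A + 1) (hrank : S.Smat.rank = n - 1)
    (B : R K n) (hBG : B ∈ G) (hBnx : ¬ xOnly B)
    (e : ℕ) (he1 : 1 ≤ e) (he2 : e ≤ S.coOrd A)
    (hord : ∀ j : Fin (n - 1),
      ordIn B (Sum.inr j) ≤ (S.Nn : ℤ) - S.gam j - S.gamT - e) :
    ∃ Bbar : R K n, S.PSIdealMem Bbar ∧ xOnly Bbar ∧ e ≤ S.coOrd (B - Bbar) :=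
  statement_9_general S G hG A hAlin hAx hAPS hAprim hrank B hBG hBnx e he1 he2 hord

end DPPE
end
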